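/- The total number of graphs on vertex set {1,...,n} satisfying the interval-clique property equals the n-th Catalan number C_n = (1/(n+1)) · C(2n, n). -/

import Mathlib

/-!
An interval-clique graph on `{0, …, n-1}` is determined by its reach function
`r i = max ({i} ∪ N(i))`, since for `i < j` we have `i ~ j ↔ j ≤ r i`; the reach functions are
exactly the monotone `r` with `i ≤ r i < n`. Such an `r` on `n + 1` points splits at its first
fixed point `k` into `r - 1` on `{0, …, k-1}` and a translate of `r` on `{k+1, …, n}`, so their
numbers satisfy the Catalan recurrence `C (n+1) = ∑ₖ C k * C (n-k)`.
-/

/-- Interval-clique property: whenever `i < j` are adjacent, `{i,...,j}` is a clique. -/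
def IntervalClique {n : ℕ} (G : SimpleGraph (Fin n)) : Prop :=
  ∀ i j k l : Fin n, i < j → G.Adj i j → i ≤ k → k ≤ j → i ≤ l → l ≤ j → k ≠ l → G.Adj k l

open Finset

/-- Reach functions on `n` points, extended by the identity from `n - 1` on. -/
structure IsReach (n : ℕ) (f : ℕ → ℕ) : Prop where
  monotone : Monotone f
  le_apply : ∀ i, i ≤ f i
  apply_eq : ∀ i, n ≤ i + 1 → f i = i

theorem isReach_id (n : ℕ) : IsReach n id := ⟨monotone_id, fun _ => le_rfl, fun _ _ => rfl⟩

namespace IsReach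

variable {n : ℕ} {f : ℕ → ℕ}

theorem apply_lt (hf : IsReach n f) {i : ℕ} (hi : i < n) : f i < n := by
  have := hf.monotone (show i ≤ n - 1 by omega)
  have := hf.apply_eq (n - 1) (by omega)
  omega

theorem eq_id (hf : IsReach 0 f) : f = id :=
  funext fun i => hf.apply_eq i (Nat.zero_le _)

end IsReach

section Graph

variable {n : ℕ}

open Classical in
noncomputable def reach (G : SimpleGraph (Fin n)) (i : ℕ) : ℕ :=
  i ⊔ (univ.filter fun j : Fin n => ∃ h : i < n, G.Adj ⟨i, h⟩ j).sup Fin.val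

def ofReach (f : ℕ → ℕ) : SimpleGraph (Fin n) :=
  SimpleGraph.fromRel fun a b => a < b ∧ (b : ℕ) ≤ f a

variable {G : SimpleGraph (Fin n)}

theorem le_reach (G : SimpleGraph (Fin n)) (i : ℕ) : i ≤ reach G i := le_sup_left

theorem le_reach_of_adj {a b : Fin n} (h : G.Adj a b) : (b : ℕ) ≤ reach G a :=
  le_sup_of_le_right <| le_sup_of_le (f := Fin.val) (by simpa using h) le_rfl

theorem reach_le {a : Fin n} {c : ℕ} (hac : (a : ℕ) ≤ c) (h : ∀ b, G.Adj a b → (b : ℕ) ≤ c) :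
    reach G a ≤ c :=
  sup_le hac <| Finset.sup_le fun b hb => h b (by simpa using hb)

theorem reach_of_le {i : ℕ} (hi : n ≤ i) : reach G i = i := by
  simp [reach, show ¬ i < n by omega]

theorem exists_adj_of_lt_reach {a : Fin n} {m : ℕ} (ham : (a : ℕ) < m) (hm : m ≤ reach G a) :
    ∃ c, G.Adj a c ∧ m ≤ c := by
  obtain ⟨c, hc, hmc⟩ :=
    (Finset.le_sup_iff (by simp; omega)).mp ((le_sup_iff.mp hm).resolve_left (by omega))
  exact ⟨c, by simpa using hc, hmc⟩

theorem IntervalClique.adj_iff_le_reach (hG : IntervalClique G) {a b : Fin n} (hab : a < b) :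
    G.Adj a b ↔ (b : ℕ) ≤ reach G a := by
  refine ⟨le_reach_of_adj, fun hb => ?_⟩
  obtain ⟨c, hac, hbc⟩ := exists_adj_of_lt_reach (Fin.lt_def.mp hab) hb
  have hbc : b ≤ c := Fin.le_def.mpr hbc
  exact hG a c a b (hab.trans_le hbc) hac le_rfl (hab.trans_le hbc).le hab.le hbc hab.ne

theorem IntervalClique.isReach_reach (hG : IntervalClique G) : IsReach n (reach G) where
  monotone i j hij := by
    rcases le_or_gt (reach G i) j with hj | hj
    · exact hj.trans (le_reach G j)
    rcases le_or_gt n i with hi | hi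
    · rw [reach_of_le hi] at hj; omega
    obtain ⟨c, hic, hjc⟩ := exists_adj_of_lt_reach (a := ⟨i, hi⟩) (lt_of_le_of_lt hij hj) le_rfl
    have hjn : j < n := by omega
    -- `j` lies in the clique spanned by `i` and its farthest neighbour `c`
    have hjc' : G.Adj ⟨j, hjn⟩ c := by
      by_cases hij' : i = j
      · subst hij'; exact hic
      refine hG _ c _ c ?_ hic ?_ ?_ ?_ le_rfl ?_ <;>
        simp only [Fin.le_def, Fin.lt_def, ne_eq, Fin.ext_iff] <;> omega
    exact hjc.trans (le_reach_of_adj hjc')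
  le_apply := le_reach G
  apply_eq i hi := by
    rcases le_or_gt n i with hni | hin
    · exact reach_of_le hni
    exact le_antisymm (reach_le (a := ⟨i, hin⟩) le_rfl fun b _ => by omega) (le_reach G i)

theorem ofReach_adj {f : ℕ → ℕ} {a b : Fin n} (hab : a < b) :
    (ofReach f : SimpleGraph (Fin n)).Adj a b ↔ (b : ℕ) ≤ f a := by
  simp [ofReach, hab, hab.ne, not_lt_of_gt hab]

theorem intervalClique_ofReach {f : ℕ → ℕ} (hf : Monotone f) :
    IntervalClique (ofReach f : SimpleGraph (Fin n)) := by
  have key : ∀ i j k l : Fin n, i < j → (ofReach f).Adj i j → i ≤ k → k < l → l ≤ j →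
      (ofReach f : SimpleGraph (Fin n)).Adj k l := fun i j k l hij hadj hik hkl hlj => by
    rw [ofReach_adj hij] at hadj
    rw [ofReach_adj hkl]
    exact (Fin.le_def.mp hlj).trans (hadj.trans (hf (Fin.le_def.mp hik)))
  intro i j k l hij hadj hik hkj hil hlj hkl
  rcases hkl.lt_or_gt with h | h
  · exact key i j k l hij hadj hik h hlj
  · exact (key i j l k hij hadj hil h hkj).symm

theorem reach_ofReach {f : ℕ → ℕ} (hf : IsReach n f) :
    reach (ofReach f : SimpleGraph (Fin n)) = f := by
  funext i
  rcases le_or_gt n i with hni | hin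
  · rw [reach_of_le hni, hf.apply_eq i (by omega)]
  refine le_antisymm (reach_le (a := ⟨i, hin⟩) (hf.le_apply i) fun b hb => ?_) ?_
  · rcases lt_or_gt_of_ne hb.ne with h | h
    · exact (ofReach_adj h).mp hb
    · exact (Fin.lt_def.mp h).le.trans (hf.le_apply i)
  · rcases (hf.le_apply i).eq_or_lt with h | h
    · exact h ▸ le_reach _ i
    · have hadj : (ofReach f).Adj (⟨i, hin⟩ : Fin n) ⟨f i, hf.apply_lt hin⟩ :=
        (ofReach_adj h).mpr le_rfl
      exact le_reach_of_adj hadj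

theorem IntervalClique.ofReach_reach (hG : IntervalClique G) : ofReach (reach G) = G := by
  ext a b
  rcases lt_trichotomy a b with h | rfl | h
  · rw [ofReach_adj h, hG.adj_iff_le_reach h]
  · simp
  · rw [SimpleGraph.adj_comm, ofReach_adj h, G.adj_comm, hG.adj_iff_le_reach h]

noncomputable def reachEquiv (n : ℕ) :
    {G : SimpleGraph (Fin n) // IntervalClique G} ≃ {f // IsReach n f} where
  toFun G := ⟨reach G.1, G.2.isReach_reach⟩
  invFun f := ⟨ofReach f.1, intervalClique_ofReach f.2.monotone⟩
  left_inv G := Subtype.ext G.2.ofReach_reach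
  right_inv f := Subtype.ext (reach_ofReach f.2)

instance (n : ℕ) : Finite {f // IsReach n f} := .of_equiv _ (reachEquiv n)

end Graph

section Decomposition

def lowerPart (k : ℕ) (f : ℕ → ℕ) (i : ℕ) : ℕ := if i < k then f i - 1 else i

def upperPart (k : ℕ) (f : ℕ → ℕ) (i : ℕ) : ℕ := f (i + (k + 1)) - (k + 1)

def glueAt (k : ℕ) (g h : ℕ → ℕ) (i : ℕ) : ℕ :=
  if i < k then g i + 1 else if i = k then k else h (i - (k + 1)) + (k + 1)

variable {n k : ℕ} {f g h : ℕ → ℕ}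

theorem IsReach.lowerPart (hf : IsReach (n + 1) f) (hfk : f k = k) (hlt : ∀ i < k, i < f i) :
    IsReach k (lowerPart k f) where
  monotone i j hij := by
    have := hf.monotone hij
    have : i ≤ k → f i ≤ f k := fun h => hf.monotone h
    have := hlt i
    simp only [_root_.lowerPart]
    split_ifs <;> omega
  le_apply i := by
    have := hlt i
    simp only [_root_.lowerPart]
    split_ifs <;> omega
  apply_eq i hi := by
    have : i ≤ k → f i ≤ f k := fun h => hf.monotone h
    have := hlt i
    simp only [_root_.lowerPart]
    split_ifs <;> omega

theorem IsReach.upperPart (hf : IsReach (n + 1) f) :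
    IsReach (n - k) (upperPart k f) where
  monotone i j hij := Nat.sub_le_sub_right (hf.monotone (by omega)) _
  le_apply i := by
    have := hf.le_apply (i + (k + 1))
    simp only [_root_.upperPart]
    omega
  apply_eq i hi := by
    have := hf.apply_eq (i + (k + 1))
    simp only [_root_.upperPart]
    omega

theorem IsReach.glueAt (hg : IsReach k g) (hh : IsReach (n - k) h) (hk : k ≤ n) :
    IsReach (n + 1) (glueAt k g h) where
  monotone i j hij := by
    have := hg.monotone hij
    have := hh.monotone (Nat.sub_le_sub_right hij (k + 1))
    have : i < k → g i < k := fun hi => hg.apply_lt hi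
    simp only [_root_.glueAt]
    split_ifs <;> omega
  le_apply i := by
    have := hg.le_apply i
    have := hh.le_apply (i - (k + 1))
    simp only [_root_.glueAt]
    split_ifs <;> omega
  apply_eq i hi := by
    have := hh.apply_eq (i - (k + 1))
    simp only [_root_.glueAt]
    split_ifs <;> omega

theorem glueAt_lowerPart_upperPart (hf : IsReach (n + 1) f) (hfk : f k = k)
    (hlt : ∀ i < k, i < f i) : glueAt k (lowerPart k f) (upperPart k f) = f := by
  funext i
  simp only [glueAt, lowerPart, upperPart]
  split_ifs with hik hik'
  · have := hlt i hik
    omega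
  · exact hik' ▸ hfk.symm
  · have := hf.le_apply i
    rw [Nat.sub_add_cancel (show k + 1 ≤ i by omega)]
    omega

theorem lowerPart_glueAt (hg : IsReach k g) : lowerPart k (glueAt k g h) = g := by
  funext i
  have := hg.apply_eq i
  simp only [glueAt, lowerPart]
  split_ifs <;> omega

theorem upperPart_glueAt : upperPart k (glueAt k g h) = h := by
  funext i
  simp only [glueAt, upperPart, Nat.add_sub_cancel]
  split_ifs <;> omega

theorem glueAt_self : glueAt k g h k = k := by simp [glueAt]

theorem lt_glueAt (hg : IsReach k g) {i : ℕ} (hi : i < k) : i < glueAt k g h i := by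
  have := hg.le_apply i
  simp only [glueAt, if_pos hi]
  omega

end Decomposition

def reachSplitEquiv {n k : ℕ} (hk : k ≤ n) :
    {f : {f // IsReach (n + 1) f} // f.1 k = k ∧ ∀ i < k, i < f.1 i} ≃
      {g // IsReach k g} × {h // IsReach (n - k) h} where
  toFun f :=
    (⟨lowerPart k f.1.1, f.1.2.lowerPart f.2.1 f.2.2⟩, ⟨upperPart k f.1.1, f.1.2.upperPart⟩)
  invFun p :=
    ⟨⟨glueAt k p.1.1 p.2.1, p.1.2.glueAt p.2.2 hk⟩, glueAt_self, fun _ hi => lt_glueAt p.1.2 hi⟩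
  left_inv f := Subtype.ext <| Subtype.ext <| glueAt_lowerPart_upperPart f.1.2 f.2.1 f.2.2
  right_inv p := Prod.ext (Subtype.ext (lowerPart_glueAt p.1.2)) (Subtype.ext upperPart_glueAt)

theorem card_isReach_succ (n : ℕ) :
    Nat.card {f // IsReach (n + 1) f} =
      ∑ k : Fin (n + 1), Nat.card {f // IsReach k f} * Nat.card {f // IsReach (n - k) f} := by
  let firstFixedPoint (f : {f // IsReach (n + 1) f}) : Fin (n + 1) :=
    ⟨Nat.find (⟨n, f.2.apply_eq n le_rfl⟩ : ∃ m, f.1 m = m),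
      Nat.lt_succ_of_le (Nat.find_le (f.2.apply_eq n le_rfl))⟩
  rw [← Nat.card_congr (Equiv.sigmaFiberEquiv firstFixedPoint), Nat.card_sigma]
  refine sum_congr rfl fun k _ => ?_
  rw [← Nat.card_prod, ← Nat.card_congr (reachSplitEquiv (Nat.lt_succ_iff.mp k.2))]
  refine Nat.card_congr (Equiv.subtypeEquivRight fun f => ?_)
  rw [Fin.ext_iff, Nat.find_eq_iff]
  exact and_congr_right' <| forall₂_congr fun i _ => (f.2.le_apply i).lt_iff_ne'.symm

theorem card_isReach (n : ℕ) : Nat.card {f // IsReach n f} = catalan n := by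
  induction n using Nat.strong_induction_on with
  | _ n ih =>
    cases n with
    | zero =>
      rw [catalan_zero, Nat.card_eq_one_iff_exists]
      exact ⟨⟨id, isReach_id 0⟩, fun f => Subtype.ext f.2.eq_id⟩
    | succ n =>
      rw [card_isReach_succ, catalan_succ]
      exact sum_congr rfl fun k _ => by rw [ih k (by omega), ih (n - k) (by omega)]

/-- the number of interval-clique graphs on `{1,...,n}` is the `n`-th
Catalan number `C_n = (1/(n+1))·C(2n,n)`. -/
theorem card_intervalClique_graphs (n : ℕ) :
    Nat.card {G : SimpleGraph (Fin n) // IntervalClique G} = catalan n := by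
  rw [Nat.card_congr (reachEquiv n), card_isReach]
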